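/- arXiv:2205.01556 — 5 statements merged into one kernel-verified Lean document; each statement's English description precedes it below -/
import Mathlib

section
/- (Advanced joint convexity) Let μ = (1−γ)μ₀ + γμ₁ and μ' = (1−γ)μ₀ + γμ₁' be mixtures of probability measures, with γ ∈ (0,1] and α ≥ 1. Then D_{α'}(μ||μ') = γ D_α(μ₁ || (1−β)μ₀ + βμ₁'), where α' = 1 + γ(α−1) and β = α'/α. -/
open MeasureTheory

/-- Advanced joint convexity of the hockey stick divergence: if
`μ = (1−γ)μ₀ + γμ₁` and `μ' = (1−γ)μ₀ + γμ₁'` (with densities `f₀, f₁, f₁'` of the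
probability measures `μ₀, μ₁, μ₁'` w.r.t. a common dominating measure `ν`),
`γ ∈ (0,1]` and `α ≥ 1`, then `D_{α'}(μ‖μ') = γ D_α(μ₁ ‖ (1−β)μ₀ + βμ₁')` where
`α' = 1 + γ(α−1)` and `β = α'/α`. -/
theorem advanced_joint_convexity {Ω : Type*} [MeasurableSpace Ω] (ν : Measure Ω)
    (f₀ f₁ f₁' : Ω → ℝ) (γ α α' β : ℝ)
    (hγ : γ ∈ Set.Ioc (0:ℝ) 1) (hα : 1 ≤ α)
    (hα' : α' = 1 + γ * (α - 1)) (hβ : β = α' / α)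
    (hf₀m : Measurable f₀) (hf₁m : Measurable f₁) (hf₁'m : Measurable f₁')
    (hf₀0 : ∀ z, 0 ≤ f₀ z) (hf₁0 : ∀ z, 0 ≤ f₁ z) (hf₁'0 : ∀ z, 0 ≤ f₁' z)
    (hf₀1 : ∫ z, f₀ z ∂ν = 1) (hf₁1 : ∫ z, f₁ z ∂ν = 1)
    (hf₁'1 : ∫ z, f₁' z ∂ν = 1) :
    ∫ z, max 0 (((1 - γ) * f₀ z + γ * f₁ z) -
        α' * ((1 - γ) * f₀ z + γ * f₁' z)) ∂ν =
      γ * ∫ z, max 0 (f₁ z - α * ((1 - β) * f₀ z + β * f₁' z)) ∂ν := by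
  have hα0 : α ≠ 0 := by linarith
  rw [← integral_const_mul]
  refine integral_congr_ae (Filter.Eventually.of_forall fun z => ?_)
  simp only []
  rw [mul_max_of_nonneg _ _ hγ.1.le, mul_zero]
  congr 1
  subst hβ hα'
  field_simp
  ring
end

section
/- For one-dimensional Gaussians N(C,σ²) and N(0,σ²) with C, σ > 0 and ε ≥ 0, the hockey stick divergence satisfies D_{e^ε}(N(C,σ²)||N(0,σ²)) = Φ(C/(2σ) − εσ/C) − e^ε Φ(−C/(2σ) − εσ/C), where Φ is the standard normal CDF. -/
open MeasureTheory

/-- Density of the Gaussian distribution `N(μ, σ²)`. -/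
noncomputable def gaussPDF (μ σ z : ℝ) : ℝ :=
  (1 / (σ * Real.sqrt (2 * Real.pi))) * Real.exp (-((z - μ) ^ 2) / (2 * σ ^ 2))

/-- The standard normal CDF `Φ`. -/
noncomputable def stdNormalCDF (x : ℝ) : ℝ := ∫ t in Set.Iic x, gaussPDF 0 1 t

lemma gaussPDF_pos (μ σ z : ℝ) (hσ : 0 < σ) : 0 < gaussPDF μ σ z := by
  apply mul_pos
  · positivity
  · exact Real.exp_pos _

lemma integrable_gaussPDF (μ σ : ℝ) (hσ : 0 < σ) : Integrable (gaussPDF μ σ) := by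
  have h : Integrable (fun z => Real.exp (-(1 / (2 * σ ^ 2)) * z ^ 2)) := by
    exact integrable_exp_neg_mul_sq (by positivity : (0:ℝ) < 1 / (2 * σ ^ 2))
  have h2 := (h.comp_sub_right μ).const_mul (1 / (σ * Real.sqrt (2 * Real.pi)))
  refine h2.congr (Filter.Eventually.of_forall fun z => ?_)
  unfold gaussPDF
  ring_nf

/-- Shift substitution on `Ioi`. -/
lemma integral_comp_add_right_Ioi (f : ℝ → ℝ) (a c : ℝ) :
    (∫ x in Set.Ioi a, f (x + c)) = ∫ x in Set.Ioi (a + c), f x := by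
  have A : MeasurableEmbedding fun x : ℝ => x + c :=
    (Homeomorph.addRight c).measurableEmbedding
  have := A.setIntegral_map (μ := volume) f (Set.Ioi (a + c))
  rw [map_add_right_eq_self (volume : Measure ℝ) c] at this
  rw [this]
  congr 1
  ext x
  simp [Set.mem_preimage, add_lt_add_iff_right]

lemma integral_gaussPDF_Ioi (μ σ T : ℝ) (hσ : 0 < σ) :
    (∫ z in Set.Ioi T, gaussPDF μ σ z) = stdNormalCDF ((μ - T) / σ) := by
  have key : ∀ x : ℝ, gaussPDF μ σ (σ * x + μ) = σ⁻¹ * gaussPDF 0 1 x := by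
    intro x
    unfold gaussPDF
    have h1 : -(σ * x + μ - μ) ^ 2 / (2 * σ ^ 2) = -(x - 0) ^ 2 / (2 * 1 ^ 2) := by
      field_simp; ring
    rw [h1]
    field_simp
  have step1 : (∫ z in Set.Ioi T, gaussPDF μ σ z)
      = ∫ x in Set.Ioi (T - μ), gaussPDF μ σ (x + μ) := by
    rw [integral_comp_add_right_Ioi (gaussPDF μ σ) (T - μ) μ, sub_add_cancel]
  have step2 : (∫ x in Set.Ioi (T - μ), gaussPDF μ σ (x + μ))
      = σ * ∫ x in Set.Ioi ((T - μ) / σ), gaussPDF μ σ (σ * x + μ) := by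
    have := MeasureTheory.integral_comp_mul_left_Ioi (fun z => gaussPDF μ σ (z + μ))
      ((T - μ) / σ) hσ
    rw [mul_div_cancel₀ _ hσ.ne'] at this
    simp only [smul_eq_mul] at this
    rw [this]
    field_simp
  have step3 : (∫ x in Set.Ioi ((T - μ) / σ), gaussPDF μ σ (σ * x + μ))
      = σ⁻¹ * ∫ x in Set.Ioi ((T - μ) / σ), gaussPDF 0 1 x := by
    rw [← integral_const_mul]
    exact setIntegral_congr_fun measurableSet_Ioi fun x _ => key x
  have step4 : (∫ x in Set.Ioi ((T - μ) / σ), gaussPDF 0 1 x)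
      = stdNormalCDF ((μ - T) / σ) := by
    have neg : ∀ x : ℝ, gaussPDF 0 1 (-x) = gaussPDF 0 1 x := by
      intro x; unfold gaussPDF; ring_nf
    have := integral_comp_neg_Ioi ((T - μ) / σ) (gaussPDF 0 1)
    simp_rw [neg] at this
    rw [this]
    unfold stdNormalCDF
    congr 1
    ring
  rw [step1, step2, step3, step4]
  field_simp

/-- For one-dimensional Gaussians `N(C,σ²)` and `N(0,σ²)` with `C, σ > 0` and
`ε ≥ 0`, the hockey stick divergence satisfies
`D_{e^ε}(N(C,σ²)‖N(0,σ²)) = Φ(C/(2σ) − εσ/C) − e^ε Φ(−C/(2σ) − εσ/C)`. -/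
theorem hockey_stick_gaussian (C σ ε : ℝ) (hC : 0 < C) (hσ : 0 < σ) (hε : 0 ≤ ε) :
    ∫ z, max 0 (gaussPDF C σ z - Real.exp ε * gaussPDF 0 σ z) =
      stdNormalCDF (C / (2 * σ) - ε * σ / C) -
        Real.exp ε * stdNormalCDF (-(C / (2 * σ)) - ε * σ / C) := by
  set T : ℝ := C / 2 + ε * σ ^ 2 / C with hT
  set f : ℝ → ℝ := fun z => gaussPDF C σ z - Real.exp ε * gaussPDF 0 σ z with hf
  have factor : ∀ z : ℝ, gaussPDF C σ z
      = gaussPDF 0 σ z * Real.exp ((2 * C * z - C ^ 2) / (2 * σ ^ 2)) := by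
    intro z
    unfold gaussPDF
    rw [mul_assoc, ← Real.exp_add]
    congr 1
    field_simp
    ring
  have sign : ∀ z : ℝ, (0 ≤ f z ↔ T ≤ z) := by
    intro z
    have hq : 0 < gaussPDF 0 σ z := gaussPDF_pos 0 σ z hσ
    rw [hf]
    simp only
    rw [factor z, mul_comm (gaussPDF 0 σ z), ← sub_mul,
      mul_nonneg_iff_of_pos_right hq, sub_nonneg]
    constructor
    · intro h2
      have h3 : ε ≤ (2 * C * z - C ^ 2) / (2 * σ ^ 2) := Real.exp_le_exp.mp h2
      rw [le_div_iff₀ (by positivity)] at h3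
      rw [hT]
      rw [div_add_div _ _ (two_ne_zero) hC.ne', div_le_iff₀ (by positivity)]
      nlinarith
    · intro h
      have h3 : ε ≤ (2 * C * z - C ^ 2) / (2 * σ ^ 2) := by
        rw [le_div_iff₀ (by positivity)]
        rw [hT, div_add_div _ _ (two_ne_zero) hC.ne', div_le_iff₀ (by positivity)] at h
        nlinarith
      exact Real.exp_le_exp.mpr h3
  have ind : ∀ z : ℝ, max 0 (f z) = Set.indicator (Set.Ici T) f z := by
    intro z
    by_cases hz : z ∈ Set.Ici T
    · rw [Set.indicator_of_mem hz, max_eq_right ((sign z).mpr hz)]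
    · rw [Set.indicator_of_notMem hz, max_eq_left]
      by_contra hcon
      push_neg at hcon
      exact hz ((sign z).mp hcon.le)
  have hint1 : IntegrableOn (gaussPDF C σ) (Set.Ici T) :=
    (integrable_gaussPDF C σ hσ).integrableOn
  have hint2 : IntegrableOn (fun z => Real.exp ε * gaussPDF 0 σ z) (Set.Ici T) :=
    ((integrable_gaussPDF 0 σ hσ).const_mul _).integrableOn
  calc (∫ z, max 0 (f z)) = ∫ z, Set.indicator (Set.Ici T) f z := by
        exact integral_congr_ae (Filter.Eventually.of_forall ind)
    _ = ∫ z in Set.Ici T, f z := integral_indicator measurableSet_Ici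
    _ = (∫ z in Set.Ici T, gaussPDF C σ z)
        - ∫ z in Set.Ici T, Real.exp ε * gaussPDF 0 σ z := integral_sub hint1 hint2
    _ = (∫ z in Set.Ioi T, gaussPDF C σ z)
        - Real.exp ε * ∫ z in Set.Ioi T, gaussPDF 0 σ z := by
        rw [integral_Ici_eq_integral_Ioi, integral_Ici_eq_integral_Ioi, integral_const_mul]
    _ = stdNormalCDF ((C - T) / σ) - Real.exp ε * stdNormalCDF ((0 - T) / σ) := by
        rw [integral_gaussPDF_Ioi C σ T hσ, integral_gaussPDF_Ioi 0 σ T hσ]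
    _ = stdNormalCDF (C / (2 * σ) - ε * σ / C) -
        Real.exp ε * stdNormalCDF (-(C / (2 * σ)) - ε * σ / C) := by
        congr 1
        · congr 1
          rw [hT]; field_simp; ring
        · congr 1
          rw [hT]; field_simp; ring
end

section
/- Let M satisfy (ε, δ)-DP and let M' be M applied to a Poisson-subsampled input where each element is included independently with probability q ∈ [0,1]. Then M' satisfies (ε', qδ)-DP with ε' = log(1 + q(e^ε − 1)). -/
open MeasureTheory

/-- Datasets differing by addition/removal of one element. -/
def NeighborAdd {X : Type*} [DecidableEq X] (D D' : Finset X) : Prop :=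
  ∃ x, x ∉ D ∧ D' = insert x D

/-- `(ε,δ)`-differential privacy of a mechanism `M` with respect to the
addition/removal neighboring relation. -/
def IsDP {X Ω : Type*} [DecidableEq X] [MeasurableSpace Ω]
    (M : Finset X → Measure Ω) (ε δ : ℝ) : Prop :=
  ∀ D D', (NeighborAdd D D' ∨ NeighborAdd D' D) → ∀ S : Set Ω, MeasurableSet S →
    M D S ≤ ENNReal.ofReal (Real.exp ε) * M D' S + ENNReal.ofReal δ

/-- The mechanism obtained by running `M` on a Poisson subsample of the input
dataset, where each element is included independently with probability `q`. -/
noncomputable def poissonSubsample {X Ω : Type*} [DecidableEq X] [MeasurableSpace Ω]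
    (q : ℝ) (M : Finset X → Measure Ω) (D : Finset X) : Measure Ω :=
  ∑ S ∈ D.powerset,
    (ENNReal.ofReal (q ^ S.card * (1 - q) ^ (D.card - S.card))) • M S

/-! ### Auxiliary lemmas -/

namespace PoissonAux

lemma real_key2 (q a δ m n : ℝ) (hq0 : 0 ≤ q) (hq1 : q ≤ 1) (ha : 1 ≤ a)
    (hδ : 0 ≤ δ) (hm : 0 ≤ m) (hn : 0 ≤ n) (h : m ≤ a * n + δ) :
    m ≤ (1 - q + q * a) * ((1 - q) * m + q * n) + q * δ := by
  have hc : (0:ℝ) ≤ 1 - q + q * a := by nlinarith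
  nlinarith [mul_nonneg (mul_nonneg hq0 (by linarith : (0:ℝ) ≤ 1 - q))
      (mul_nonneg hm (sq_nonneg (a-1))),
    mul_nonneg (mul_nonneg hq0 (by linarith : (0:ℝ) ≤ a - 1)) hδ,
    mul_nonneg (mul_nonneg hq0 hc) (by linarith : 0 ≤ a*n + δ - m)]

lemma real_key1 (q a δ m n : ℝ) (hq0 : 0 ≤ q) (hq1 : q ≤ 1) (ha : 1 ≤ a)
    (hδ : 0 ≤ δ) (hm : 0 ≤ m) (hn : 0 ≤ n) (h : n ≤ a * m + δ) :
    (1 - q) * m + q * n ≤ (1 - q + q * a) * m + q * δ := by nlinarith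

/-- generic convex-combination bound in `ℝ≥0∞` -/
lemma sum_bound {ι : Type*} (s : Finset ι) (w f g : ι → ENNReal) (c d : ENNReal)
    (hw : ∑ i ∈ s, w i = 1) (h : ∀ i ∈ s, f i ≤ c * g i + d) :
    ∑ i ∈ s, w i * f i ≤ c * (∑ i ∈ s, w i * g i) + d := by
  calc ∑ i ∈ s, w i * f i ≤ ∑ i ∈ s, w i * (c * g i + d) :=
        Finset.sum_le_sum fun i hi => mul_le_mul_right (h i hi) _
    _ = ∑ i ∈ s, (c * (w i * g i) + w i * d) := by
        refine Finset.sum_congr rfl fun i _ => ?_; ring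
    _ = c * (∑ i ∈ s, w i * g i) + d := by
        rw [Finset.sum_add_distrib, ← Finset.mul_sum, ← Finset.sum_mul, hw, one_mul]

variable {X Ω : Type*} [DecidableEq X] [MeasurableSpace Ω]

/-- weight of a subset -/
noncomputable def w (q : ℝ) (D S : Finset X) : ℝ :=
  q ^ S.card * (1 - q) ^ (D.card - S.card)

lemma w_nonneg {q : ℝ} (hq0 : 0 ≤ q) (hq1 : q ≤ 1) (D S : Finset X) :
    0 ≤ w q D S := by
  have : (0:ℝ) ≤ 1 - q := by linarith
  exact mul_nonneg (pow_nonneg hq0 _) (pow_nonneg this _)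

lemma sum_w (q : ℝ) (D : Finset X) : ∑ S ∈ D.powerset, w q D S = 1 := by
  calc ∑ S ∈ D.powerset, w q D S
      = ∑ S ∈ D.powerset, (∏ _x ∈ S, q) * ∏ _x ∈ D \ S, (1 - q) := by
        refine Finset.sum_congr rfl fun S hS => ?_
        rw [Finset.prod_const, Finset.prod_const,
          Finset.card_sdiff_of_subset (Finset.mem_powerset.mp hS)]
        rfl
    _ = ∏ _x ∈ D, (q + (1 - q)) := (Finset.prod_add _ _ _).symm
    _ = 1 := by simp

lemma psub_apply (q : ℝ) (M : Finset X → Measure Ω) (D : Finset X) (A : Set Ω) :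
    poissonSubsample q M D A = ∑ S ∈ D.powerset, ENNReal.ofReal (w q D S) * M S A := by
  rw [poissonSubsample, Measure.finset_sum_apply]
  refine Finset.sum_congr rfl fun S _ => ?_
  rw [Measure.smul_apply, smul_eq_mul]; rfl

lemma psub_insert_apply {q : ℝ} (hq0 : 0 ≤ q) (hq1 : q ≤ 1)
    (M : Finset X → Measure Ω) {D : Finset X} {x : X}
    (hx : x ∉ D) (A : Set Ω) :
    poissonSubsample q M (insert x D) A
      = ∑ S ∈ D.powerset, ENNReal.ofReal (w q D S) *
          (ENNReal.ofReal (1 - q) * M S A + ENNReal.ofReal q * M (insert x S) A) := by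
  rw [psub_apply, Finset.powerset_insert, Finset.sum_union, Finset.sum_image]
  · rw [← Finset.sum_add_distrib]
    refine Finset.sum_congr rfl fun S hS => ?_
    have hSD : S ⊆ D := Finset.mem_powerset.mp hS
    have hxS : x ∉ S := fun h => hx (hSD h)
    have hcard : S.card ≤ D.card := Finset.card_le_card hSD
    have h1 : w q (insert x D) S = w q D S * (1 - q) := by
      rw [w, w, Finset.card_insert_of_notMem hx]
      rw [show D.card + 1 - S.card = (D.card - S.card) + 1 by omega, pow_succ]
      ring
    have h2 : w q (insert x D) (insert x S) = w q D S * q := by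
      rw [w, w, Finset.card_insert_of_notMem hx, Finset.card_insert_of_notMem hxS]
      rw [show D.card + 1 - (S.card + 1) = D.card - S.card by omega, pow_succ]
      ring
    have hw := w_nonneg hq0 hq1 D S
    rw [h1, h2, ENNReal.ofReal_mul hw, ENNReal.ofReal_mul hw]
    ring
  · intro S hS T hT hST
    have hxS : x ∉ S := fun h => hx (Finset.mem_powerset.mp hS h)
    have hxT : x ∉ T := fun h => hx (Finset.mem_powerset.mp hT h)
    have := congrArg (Finset.erase · x) hST
    simpa [Finset.erase_insert, hxS, hxT] using this
  · rw [Finset.disjoint_right]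
    rintro S hS hS'
    obtain ⟨T, _, rfl⟩ := Finset.mem_image.mp hS
    exact hx (Finset.mem_powerset.mp hS' (Finset.mem_insert_self x T))

end PoissonAux

/-- Privacy amplification by Poisson subsampling: if `M` satisfies `(ε,δ)`-DP, then
the Poisson-subsampled mechanism `M'` (subsampling rate `q ∈ [0,1]`) satisfies
`(ε', qδ)`-DP with `ε' = log(1 + q(e^ε − 1))`. -/
theorem poisson_subsampling_amplification {X Ω : Type*} [DecidableEq X]
    [MeasurableSpace Ω] (M : Finset X → Measure Ω) (q ε δ : ℝ)
    (hq : q ∈ Set.Icc (0:ℝ) 1) (hε : 0 ≤ ε) (hδ : 0 ≤ δ)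
    (hprob : ∀ S, IsProbabilityMeasure (M S))
    (hM : IsDP M ε δ) :
    IsDP (poissonSubsample q M) (Real.log (1 + q * (Real.exp ε - 1))) (q * δ) := by
  obtain ⟨hq0, hq1⟩ := hq
  set a : ℝ := Real.exp ε with ha_def
  have ha : 1 ≤ a := Real.one_le_exp hε
  have hc0 : (0:ℝ) ≤ 1 - q + q * a := by nlinarith
  have hexp : Real.exp (Real.log (1 + q * (a - 1))) = 1 - q + q * a := by
    rw [Real.exp_log (by nlinarith)]; ring
  have h1q : (0:ℝ) ≤ 1 - q := by linarith
  -- per-term inequalities in ℝ≥0∞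
  have key : ∀ S : Finset X, ∀ x ∉ S, ∀ A : Set Ω, MeasurableSet A →
      (M S A ≤ ENNReal.ofReal (1 - q + q * a) *
          (ENNReal.ofReal (1 - q) * M S A + ENNReal.ofReal q * M (insert x S) A)
          + ENNReal.ofReal (q * δ)) ∧
      (ENNReal.ofReal (1 - q) * M S A + ENNReal.ofReal q * M (insert x S) A ≤
          ENNReal.ofReal (1 - q + q * a) * M S A + ENNReal.ofReal (q * δ)) := by
    intro S x hxS A hA
    have hnb : NeighborAdd S (insert x S) ∨ NeighborAdd (insert x S) S :=
      Or.inl ⟨x, hxS, rfl⟩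
    have hnb' : NeighborAdd (insert x S) S ∨ NeighborAdd S (insert x S) :=
      Or.inr ⟨x, hxS, rfl⟩
    have hfin1 : M S A ≠ ⊤ := (measure_lt_top _ _).ne
    have hfin2 : M (insert x S) A ≠ ⊤ := (measure_lt_top _ _).ne
    set m : ℝ := (M S A).toReal with hm_def
    set n : ℝ := (M (insert x S) A).toReal with hn_def
    have hm0 : 0 ≤ m := ENNReal.toReal_nonneg
    have hn0 : 0 ≤ n := ENNReal.toReal_nonneg
    have hmS : M S A = ENNReal.ofReal m := (ENNReal.ofReal_toReal hfin1).symm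
    have hnS : M (insert x S) A = ENNReal.ofReal n := (ENNReal.ofReal_toReal hfin2).symm
    have hdp1 : m ≤ a * n + δ := by
      have h := hM S (insert x S) hnb A hA
      rw [hmS, hnS, ← ha_def, ← ENNReal.ofReal_mul (by positivity),
        ← ENNReal.ofReal_add (by positivity) hδ] at h
      exact (ENNReal.ofReal_le_ofReal_iff (by positivity)).mp h
    have hdp2 : n ≤ a * m + δ := by
      have h := hM (insert x S) S hnb' A hA
      rw [hmS, hnS, ← ha_def, ← ENNReal.ofReal_mul (by positivity),
        ← ENNReal.ofReal_add (by positivity) hδ] at h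
      exact (ENNReal.ofReal_le_ofReal_iff (by positivity)).mp h
    have hcomb : ENNReal.ofReal (1 - q) * M S A + ENNReal.ofReal q * M (insert x S) A
        = ENNReal.ofReal ((1 - q) * m + q * n) := by
      rw [hmS, hnS, ← ENNReal.ofReal_mul h1q, ← ENNReal.ofReal_mul hq0,
        ← ENNReal.ofReal_add (by positivity) (by positivity)]
    constructor
    · rw [hcomb, hmS, ← ENNReal.ofReal_mul hc0,
        ← ENNReal.ofReal_add (by positivity) (by positivity)]
      exact ENNReal.ofReal_le_ofReal
        (PoissonAux.real_key2 q a δ m n hq0 hq1 ha hδ hm0 hn0 hdp1)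
    · rw [hcomb, hmS, ← ENNReal.ofReal_mul hc0,
        ← ENNReal.ofReal_add (by positivity) (by positivity)]
      exact ENNReal.ofReal_le_ofReal
        (PoissonAux.real_key1 q a δ m n hq0 hq1 ha hδ hm0 hn0 hdp2)
  -- sum of weights is 1 in ℝ≥0∞
  have hsumw : ∀ D : Finset X,
      ∑ S ∈ D.powerset, ENNReal.ofReal (PoissonAux.w q D S) = 1 := by
    intro D
    rw [← ENNReal.ofReal_sum_of_nonneg (fun S _ => PoissonAux.w_nonneg hq0 hq1 D S),
      PoissonAux.sum_w, ENNReal.ofReal_one]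
  -- the two one-sided bounds
  have main : ∀ (D : Finset X) (x : X), x ∉ D → ∀ A : Set Ω, MeasurableSet A →
      (poissonSubsample q M D A ≤ ENNReal.ofReal (1 - q + q * a) *
          poissonSubsample q M (insert x D) A + ENNReal.ofReal (q * δ)) ∧
      (poissonSubsample q M (insert x D) A ≤ ENNReal.ofReal (1 - q + q * a) *
          poissonSubsample q M D A + ENNReal.ofReal (q * δ)) := by
    intro D x hx A hA
    rw [PoissonAux.psub_insert_apply hq0 hq1 M hx A, PoissonAux.psub_apply]
    constructor
    · refine PoissonAux.sum_bound _ _ _ _ _ _ (hsumw D) fun S hS => ?_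
      exact (key S x (fun h => hx (Finset.mem_powerset.mp hS h)) A hA).1
    · refine PoissonAux.sum_bound _ _ _ _ _ _ (hsumw D) fun S hS => ?_
      exact (key S x (fun h => hx (Finset.mem_powerset.mp hS h)) A hA).2
  intro D D' hnb A hA
  rw [show Real.log (1 + q * (Real.exp ε - 1)) = Real.log (1 + q * (a - 1)) from rfl]
  rcases hnb with ⟨x, hx, rfl⟩ | ⟨x, hx, rfl⟩
  · have := (main D x hx A hA).1
    rwa [← hexp] at this
  · have := (main D' x hx A hA).2
    rwa [← hexp] at this
end

section
/- Let ξ = (1−pq)ν + pq·ξ₂ and ξ' = (1−pq)ν + pq·ξ₁ where ν = c₁ξ₀ + c₂ξ₁. Then for α = e^ε, α' = e^{ε'} with ε = log(1+pq(e^{ε'}−1)) and β = e^{ε−ε'}, the advanced joint convexity identity gives D_α(ξ||ξ') = pq·D_{α'}(ξ₂ || (1−β)(c₁ξ₀ + c₂ξ₁) + βξ₁), and by joint convexity this is at most pq(1−β)c₁ D_{α'}(ξ₂||ξ₀) + pq((1−β)c₂ + β) D_{α'}(ξ₂||ξ₁). -/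
/-!
With `w = pq`, the choice `e^ε = 1 + w (e^{ε'} - 1)` makes the pointwise identity
`(ν + w (f₂ - ν)) - e^ε (ν + w (f₁ - ν)) = w (f₂ - e^{ε'} ((1 - β) ν + β f₁))` hold for every `ν`,
since `e^ε - 1 = w (e^{ε'} - 1)` and `e^ε = e^{ε'} β`; as `w ≥ 0` it passes through `max 0 ·`.
The bound is convexity of `t ↦ max 0 t`, applied to the decomposition of the mixed reference
density `(1 - β) (c₁ f₀ + c₂ f₁) + β f₁` with weights `(1 - β) c₁` and `(1 - β) c₂ + β`,
which are nonnegative because `β ≤ 1` and sum to `1` because `c₁ + c₂ = 1`.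
-/

open MeasureTheory

namespace Real

lemma exp_log_one_add_mul_exp_sub_one {w ε' : ℝ} (hw : 0 ≤ w) (hε' : 0 ≤ ε') :
    exp (log (1 + w * (exp ε' - 1))) = 1 + w * (exp ε' - 1) :=
  exp_log (by nlinarith [one_le_exp hε'])

lemma log_one_add_mul_exp_sub_one_le {w ε' : ℝ} (hw₀ : 0 ≤ w) (hw₁ : w ≤ 1) (hε' : 0 ≤ ε') :
    log (1 + w * (exp ε' - 1)) ≤ ε' :=
  (log_le_iff_le_exp (by nlinarith [one_le_exp hε'])).2 (by nlinarith [one_le_exp hε'])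

end Real

lemma max_zero_mul_add_mul_le {a b x y : ℝ} (ha : 0 ≤ a) (hb : 0 ≤ b) :
    max 0 (a * x + b * y) ≤ a * max 0 x + b * max 0 y :=
  max_le (by positivity)
    (add_le_add (mul_le_mul_of_nonneg_left (le_max_right _ _) ha)
      (mul_le_mul_of_nonneg_left (le_max_right _ _) hb))

section HockeyStick

variable {Ω : Type*} [MeasurableSpace Ω] {μ : Measure Ω}

lemma integral_max_zero_sub_mixture_eq (ν f₁ f₂ : Ω → ℝ) {w α α' β : ℝ} (hw : 0 ≤ w)
    (hα : α = 1 + w * (α' - 1)) (hαβ : α = α' * β) :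
    ∫ z, max 0 (((1 - w) * ν z + w * f₂ z) - α * ((1 - w) * ν z + w * f₁ z)) ∂μ =
      w * ∫ z, max 0 (f₂ z - α' * ((1 - β) * ν z + β * f₁ z)) ∂μ := by
  have hpoint : ∀ z, max 0 (((1 - w) * ν z + w * f₂ z) - α * ((1 - w) * ν z + w * f₁ z)) =
      w * max 0 (f₂ z - α' * ((1 - β) * ν z + β * f₁ z)) := fun z => by
    rw [mul_max_of_nonneg _ _ hw, mul_zero]
    congr 1
    linear_combination (-ν z) * hα + w * (ν z - f₁ z) * hαβ
  simp_rw [hpoint, integral_const_mul]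

lemma integral_max_zero_sub_mixture_le {f g h : Ω → ℝ} {α a b : ℝ} (ha : 0 ≤ a) (hb : 0 ≤ b)
    (hab : a + b = 1) (hg : Integrable (fun z => max 0 (f z - α * g z)) μ)
    (hh : Integrable (fun z => max 0 (f z - α * h z)) μ) :
    ∫ z, max 0 (f z - α * (a * g z + b * h z)) ∂μ ≤
      a * (∫ z, max 0 (f z - α * g z) ∂μ) + b * ∫ z, max 0 (f z - α * h z) ∂μ := by
  rw [← integral_const_mul, ← integral_const_mul,
    ← integral_add (hg.const_mul a) (hh.const_mul b)]
  refine integral_mono_of_nonneg (.of_forall fun _ => le_max_left _ _)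
    ((hg.const_mul a).add (hh.const_mul b)) (.of_forall fun z => ?_)
  have hsplit : f z - α * (a * g z + b * h z) = a * (f z - α * g z) + b * (f z - α * h z) := by
    linear_combination (-f z) * hab
  simpa only [hsplit] using max_zero_mul_add_mul_le ha hb

end HockeyStick

theorem ajc_and_convexity_bound_general {Ω : Type*} [MeasurableSpace Ω] (μ₀ : Measure Ω)
    (f₀ f₁ f₂ : Ω → ℝ) (p q ε ε' α α' β c₁ c₂ : ℝ)
    (hp : p ∈ Set.Ioc (0:ℝ) 1) (hq : q ∈ Set.Ioc (0:ℝ) 1) (hpq : p * q < 1)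
    (hε' : 0 ≤ ε') (hε : ε = Real.log (1 + p * q * (Real.exp ε' - 1)))
    (hα : α = Real.exp ε) (hα' : α' = Real.exp ε') (hβ : β = Real.exp (ε - ε'))
    (hc₁ : c₁ = (1 - p) / (1 - p * q)) (hc₂ : c₂ = p * (1 - q) / (1 - p * q))
    (hi₀ : Integrable (fun z => max 0 (f₂ z - α' * f₀ z)) μ₀)
    (hi₁ : Integrable (fun z => max 0 (f₂ z - α' * f₁ z)) μ₀) :
    (∫ z, max 0 (((1 - p * q) * (c₁ * f₀ z + c₂ * f₁ z) + p * q * f₂ z) -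
          α * ((1 - p * q) * (c₁ * f₀ z + c₂ * f₁ z) + p * q * f₁ z)) ∂μ₀ =
        p * q * ∫ z, max 0 (f₂ z -
          α' * ((1 - β) * (c₁ * f₀ z + c₂ * f₁ z) + β * f₁ z)) ∂μ₀) ∧
      p * q * (∫ z, max 0 (f₂ z -
          α' * ((1 - β) * (c₁ * f₀ z + c₂ * f₁ z) + β * f₁ z)) ∂μ₀) ≤
        p * q * (1 - β) * c₁ * (∫ z, max 0 (f₂ z - α' * f₀ z) ∂μ₀) +
          p * q * ((1 - β) * c₂ + β) * ∫ z, max 0 (f₂ z - α' * f₁ z) ∂μ₀ := by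
  obtain ⟨hp₀, hp₁⟩ := hp
  obtain ⟨hq₀, hq₁⟩ := hq
  have hpq₀ : 0 ≤ p * q := by positivity
  have hα_eq : α = 1 + p * q * (α' - 1) := by
    rw [hα, hε, hα', Real.exp_log_one_add_mul_exp_sub_one hpq₀ hε']
  have hαβ : α = α' * β := by rw [hα, hα', hβ, ← Real.exp_add, add_sub_cancel]
  have hβ₁ : β ≤ 1 := by
    rw [hβ, Real.exp_le_one_iff, sub_nonpos, hε]
    exact Real.log_one_add_mul_exp_sub_one_le hpq₀ hpq.le hε'
  have hden : 0 < 1 - p * q := sub_pos.2 hpq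
  have hc₁₀ : 0 ≤ c₁ := hc₁ ▸ div_nonneg (sub_nonneg.2 hp₁) hden.le
  have hc₂₀ : 0 ≤ c₂ := hc₂ ▸ div_nonneg (mul_nonneg hp₀.le (sub_nonneg.2 hq₁)) hden.le
  have hc_sum : c₁ + c₂ = 1 := by
    rw [hc₁, hc₂, ← add_div, div_eq_one_iff_eq hden.ne']
    ring
  refine ⟨integral_max_zero_sub_mixture_eq (fun z => c₁ * f₀ z + c₂ * f₁ z) f₁ f₂ hpq₀ hα_eq hαβ,
    ?_⟩
  have hweights : ∀ z, (1 - β) * (c₁ * f₀ z + c₂ * f₁ z) + β * f₁ z =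
      (1 - β) * c₁ * f₀ z + ((1 - β) * c₂ + β) * f₁ z := fun z => by ring
  simp_rw [hweights]
  have hβ₀ : 0 ≤ β := hβ ▸ (Real.exp_pos _).le
  have hconv := integral_max_zero_sub_mixture_le (a := (1 - β) * c₁) (b := (1 - β) * c₂ + β)
    (mul_nonneg (sub_nonneg.2 hβ₁) hc₁₀) (add_nonneg (mul_nonneg (sub_nonneg.2 hβ₁) hc₂₀) hβ₀)
    (by linear_combination (1 - β) * hc_sum) hi₀ hi₁
  exact (mul_le_mul_of_nonneg_left hconv hpq₀).trans_eq (by ring)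

/-- For `ξ = (1−pq)ν + pq·ξ₂` and `ξ' = (1−pq)ν + pq·ξ₁` with
`ν = c₁ξ₀ + c₂ξ₁` (densities `f₀, f₁, f₂` of the probability measures
`ξ₀, ξ₁, ξ₂` w.r.t. a common dominating measure `μ₀`), `α = e^ε`, `α' = e^{ε'}`,
`ε = log(1 + pq(e^{ε'} − 1))` and `β = e^{ε−ε'}`, advanced joint convexity gives
`D_α(ξ‖ξ') = pq·D_{α'}(ξ₂ ‖ (1−β)(c₁ξ₀ + c₂ξ₁) + βξ₁)`, and by joint convexity
this is at most
`pq(1−β)c₁ D_{α'}(ξ₂‖ξ₀) + pq((1−β)c₂ + β) D_{α'}(ξ₂‖ξ₁)`. -/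
theorem ajc_and_convexity_bound {Ω : Type*} [MeasurableSpace Ω] (μ₀ : Measure Ω)
    (f₀ f₁ f₂ : Ω → ℝ) (p q ε ε' α α' β c₁ c₂ : ℝ)
    (hp : p ∈ Set.Ioc (0:ℝ) 1) (hq : q ∈ Set.Ioc (0:ℝ) 1) (hpq : p * q < 1)
    (hε' : 0 ≤ ε') (hε : ε = Real.log (1 + p * q * (Real.exp ε' - 1)))
    (hα : α = Real.exp ε) (hα' : α' = Real.exp ε') (hβ : β = Real.exp (ε - ε'))
    (hc₁ : c₁ = (1 - p) / (1 - p * q)) (hc₂ : c₂ = p * (1 - q) / (1 - p * q))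
    (hf₀m : Measurable f₀) (hf₁m : Measurable f₁) (hf₂m : Measurable f₂)
    (hf₀0 : ∀ z, 0 ≤ f₀ z) (hf₁0 : ∀ z, 0 ≤ f₁ z) (hf₂0 : ∀ z, 0 ≤ f₂ z)
    (hf₀1 : ∫ z, f₀ z ∂μ₀ = 1) (hf₁1 : ∫ z, f₁ z ∂μ₀ = 1)
    (hf₂1 : ∫ z, f₂ z ∂μ₀ = 1)
    (hi₀ : Integrable (fun z => max 0 (f₂ z - α' * f₀ z)) μ₀)
    (hi₁ : Integrable (fun z => max 0 (f₂ z - α' * f₁ z)) μ₀)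
    (himix : Integrable (fun z =>
      max 0 (f₂ z - α' * ((1 - β) * (c₁ * f₀ z + c₂ * f₁ z) + β * f₁ z))) μ₀) :
    (∫ z, max 0 (((1 - p * q) * (c₁ * f₀ z + c₂ * f₁ z) + p * q * f₂ z) -
          α * ((1 - p * q) * (c₁ * f₀ z + c₂ * f₁ z) + p * q * f₁ z)) ∂μ₀ =
        p * q * ∫ z, max 0 (f₂ z -
          α' * ((1 - β) * (c₁ * f₀ z + c₂ * f₁ z) + β * f₁ z)) ∂μ₀) ∧
      p * q * (∫ z, max 0 (f₂ z -
          α' * ((1 - β) * (c₁ * f₀ z + c₂ * f₁ z) + β * f₁ z)) ∂μ₀) ≤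
        p * q * (1 - β) * c₁ * (∫ z, max 0 (f₂ z - α' * f₀ z) ∂μ₀) +
          p * q * ((1 - β) * c₂ + β) * ∫ z, max 0 (f₂ z - α' * f₁ z) ∂μ₀ :=
  ajc_and_convexity_bound_general μ₀ f₀ f₁ f₂ p q ε ε' α α' β c₁ c₂ hp hq hpq hε' hε hα hα' hβ hc₁
    hc₂ hi₀ hi₁
end

section
/- For multivariate isotropic Gaussians on ℝ^m with means v₁, v₂ and covariance σ²I_m, the hockey stick divergence D_α(N(v₁, σ²I_m)||N(v₂, σ²I_m)) depends only on ‖v₁ − v₂‖₂ and equals the one-dimensional divergence D_α(N(‖v₁−v₂‖₂, σ²)||N(0, σ²)). -/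
open MeasureTheory

/-- Density of the isotropic Gaussian `N(v, σ²I_m)` on `ℝ^m`. -/
noncomputable def isoGaussPDF (m : ℕ) (v : Fin m → ℝ) (σ : ℝ) (z : Fin m → ℝ) : ℝ :=
  ∏ i, gaussPDF (v i) σ (z i)

/-!
Both densities are radial functions of the Euclidean distance to their means, and Lebesgue
measure is invariant under translations and linear isometries. A translation followed by a
reflection carries any pair of means to any other pair at the same distance, so the integral
depends only on `d = ‖v₁ - v₂‖₂`. For the means `(d, 0, …, 0)` and `0` the integrand splits
as the one-dimensional integrand in the first coordinate times standard Gaussian densities in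
the others, which integrate to `1` by Fubini.
-/

section Isometry

variable {E : Type*} [NormedAddCommGroup E] [InnerProductSpace ℝ E] [FiniteDimensional ℝ E]
  [MeasurableSpace E] [BorelSpace E]

theorem integral_comp_dist_eq_of_dist_eq (F : ℝ → ℝ → ℝ) {a₁ a₂ b₁ b₂ : E}
    (h : dist b₁ b₂ = dist a₁ a₂) :
    ∫ z, F (dist z a₁) (dist z a₂) = ∫ z, F (dist z b₁) (dist z b₂) := by
  obtain ⟨R, hR⟩ : ∃ R : E ≃ₗᵢ[ℝ] E, R (b₁ - b₂) = a₁ - a₂ :=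
    ⟨_, Submodule.reflection_sub (by rwa [← dist_eq_norm, ← dist_eq_norm])⟩
  have hdist : ∀ y, dist (R y + a₂) a₁ = dist (y + b₂) b₁ := fun y => by
    have hsub : R y + a₂ - a₁ = R (y + b₂ - b₁) := by
      rw [show y + b₂ - b₁ = y - (b₁ - b₂) by abel, map_sub, hR]
      abel
    rw [dist_eq_norm, dist_eq_norm, hsub, R.norm_map]
  calc ∫ z, F (dist z a₁) (dist z a₂)
      = ∫ y, F (dist (R y + a₂) a₁) (dist (R y + a₂) a₂) := by
        rw [← integral_add_right_eq_self _ a₂]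
        exact (R.measurePreserving.integral_comp R.toHomeomorph.measurableEmbedding
          (fun y => F (dist (y + a₂) a₁) (dist (y + a₂) a₂))).symm
    _ = ∫ y, F (dist (y + b₂) b₁) (dist (y + b₂) b₂) := by
        simp only [hdist, dist_add_self_left, R.norm_map]
    _ = ∫ z, F (dist z b₁) (dist z b₂) :=
        integral_add_right_eq_self (fun z => F (dist z b₁) (dist z b₂)) b₂

end Isometry

theorem EuclideanSpace.dist_toLp_sq {ι : Type*} [Fintype ι] (x y : ι → ℝ) :
    dist (WithLp.toLp 2 x) (WithLp.toLp 2 y) ^ 2 = ∑ i, (x i - y i) ^ 2 := by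
  simp [EuclideanSpace.dist_sq_eq, Real.dist_eq, sq_abs]

theorem gaussPDF_eq_gaussianPDFReal {σ : ℝ} (hσ : 0 ≤ σ) (μ z : ℝ) :
    gaussPDF μ σ z = ProbabilityTheory.gaussianPDFReal μ (σ ^ 2).toNNReal z := by
  unfold gaussPDF ProbabilityTheory.gaussianPDFReal
  rw [Real.coe_toNNReal _ (sq_nonneg σ), mul_comm (2 * Real.pi),
    Real.sqrt_mul (sq_nonneg σ), Real.sqrt_sq hσ, one_div]

theorem gaussPDF_nonneg {σ : ℝ} (hσ : 0 ≤ σ) (μ z : ℝ) : 0 ≤ gaussPDF μ σ z := by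
  rw [gaussPDF_eq_gaussianPDFReal hσ]
  exact ProbabilityTheory.gaussianPDFReal_nonneg _ _ _

theorem integral_gaussPDF {σ : ℝ} (hσ : 0 < σ) (μ : ℝ) : ∫ z, gaussPDF μ σ z = 1 := by
  simp_rw [gaussPDF_eq_gaussianPDFReal hσ.le]
  exact ProbabilityTheory.integral_gaussianPDFReal_eq_one μ
    (Real.toNNReal_pos.mpr (pow_pos hσ 2)).ne'

theorem isoGaussPDF_eq_dist (m : ℕ) (v : Fin m → ℝ) (σ : ℝ) (z : Fin m → ℝ) :
    isoGaussPDF m v σ z = (1 / (σ * Real.sqrt (2 * Real.pi))) ^ m *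
      Real.exp (-dist (WithLp.toLp 2 z) (WithLp.toLp 2 v) ^ 2 / (2 * σ ^ 2)) := by
  simp only [EuclideanSpace.dist_toLp_sq, isoGaussPDF, gaussPDF]
  rw [Finset.prod_mul_distrib, Finset.prod_const, Finset.card_univ, Fintype.card_fin,
    ← Real.exp_sum, ← Finset.sum_neg_distrib, Finset.sum_div]

theorem integral_isoGaussPDF_comp_eq_of_sum_sq_eq (Ψ : ℝ → ℝ → ℝ) {m : ℕ} (σ : ℝ)
    {v₁ v₂ u₁ u₂ : Fin m → ℝ} (h : ∑ i, (v₁ i - v₂ i) ^ 2 = ∑ i, (u₁ i - u₂ i) ^ 2) :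
    ∫ z, Ψ (isoGaussPDF m v₁ σ z) (isoGaussPDF m v₂ σ z) =
      ∫ z, Ψ (isoGaussPDF m u₁ σ z) (isoGaussPDF m u₂ σ z) := by
  have hdist : dist (WithLp.toLp 2 u₁) (WithLp.toLp 2 u₂) =
      dist (WithLp.toLp 2 v₁) (WithLp.toLp 2 v₂) := by
    rw [← sq_eq_sq₀ dist_nonneg dist_nonneg, EuclideanSpace.dist_toLp_sq,
      EuclideanSpace.dist_toLp_sq, h]
  have hvol := EuclideanSpace.volume_preserving_symm_measurableEquiv_toLp (Fin m)
  set c := (1 / (σ * Real.sqrt (2 * Real.pi))) ^ m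
  simp_rw [isoGaussPDF_eq_dist]
  rw [← hvol.integral_comp', ← hvol.integral_comp']
  exact integral_comp_dist_eq_of_dist_eq
    (fun r s => Ψ (c * Real.exp (-r ^ 2 / (2 * σ ^ 2))) (c * Real.exp (-s ^ 2 / (2 * σ ^ 2))))
    hdist

theorem max_zero_sub_mul_mul {a b p : ℝ} (α : ℝ) (hp : 0 ≤ p) :
    max 0 (a * p - α * (b * p)) = max 0 (a - α * b) * p := by
  rw [max_mul_of_nonneg _ _ hp, zero_mul, sub_mul, mul_assoc]

theorem integral_hockeyStick_isoGaussPDF_cons (n : ℕ) (d : ℝ) {σ : ℝ} (hσ : 0 < σ) (α : ℝ) :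
    ∫ z : Fin (n + 1) → ℝ,
        max 0 (isoGaussPDF (n + 1) (Fin.cons d 0) σ z - α * isoGaussPDF (n + 1) 0 σ z) =
      ∫ t, max 0 (gaussPDF d σ t - α * gaussPDF 0 σ t) := by
  let f : Fin (n + 1) → ℝ → ℝ :=
    Fin.cons (fun t => max 0 (gaussPDF d σ t - α * gaussPDF 0 σ t)) fun _ => gaussPDF 0 σ
  have hprod : ∀ z : Fin (n + 1) → ℝ,
      max 0 (isoGaussPDF (n + 1) (Fin.cons d 0) σ z - α * isoGaussPDF (n + 1) 0 σ z) =
        ∏ i, f i (z i) := fun z => by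
    simp only [isoGaussPDF, Fin.prod_univ_succ, f, Fin.cons_zero, Fin.cons_succ, Pi.zero_apply]
    exact max_zero_sub_mul_mul α (Finset.prod_nonneg fun i _ => gaussPDF_nonneg hσ.le _ _)
  rw [integral_congr_ae (ae_of_all _ hprod), integral_fin_nat_prod_volume_eq_prod,
    Fin.prod_univ_succ]
  simp [f, integral_gaussPDF hσ]

theorem integral_hockeyStick_isoGaussPDF_zero (v₁ v₂ : Fin 0 → ℝ) {σ : ℝ} (hσ : 0 < σ)
    (α : ℝ) :
    ∫ z, max 0 (isoGaussPDF 0 v₁ σ z - α * isoGaussPDF 0 v₂ σ z) =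
      ∫ t, max 0 (gaussPDF 0 σ t - α * gaussPDF 0 σ t) := by
  have hpoint : ∀ t, max 0 (gaussPDF 0 σ t - α * gaussPDF 0 σ t) =
      max 0 (1 - α * 1) * gaussPDF 0 σ t := fun t => by
    simpa using max_zero_sub_mul_mul (a := 1) (b := 1) α (gaussPDF_nonneg hσ.le 0 t)
  simp [isoGaussPDF, hpoint, integral_const_mul, integral_gaussPDF hσ,
    Measure.volume_pi_eq_dirac 0]

theorem hockey_stick_iso_gaussian_general (m : ℕ) (v₁ v₂ : Fin m → ℝ) (σ α : ℝ)
    (hσ : 0 < σ) :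
    ∫ z : Fin m → ℝ, max 0 (isoGaussPDF m v₁ σ z - α * isoGaussPDF m v₂ σ z) =
      ∫ z : ℝ, max 0 (gaussPDF (Real.sqrt (∑ i, (v₁ i - v₂ i) ^ 2)) σ z -
        α * gaussPDF 0 σ z) := by
  cases m with
  | zero => simpa using integral_hockeyStick_isoGaussPDF_zero v₁ v₂ hσ α
  | succ n =>
    set d := Real.sqrt (∑ i, (v₁ i - v₂ i) ^ 2)
    have hd : ∑ i, (v₁ i - v₂ i) ^ 2 = ∑ i, ((Fin.cons d 0 : Fin (n + 1) → ℝ) i - 0) ^ 2 := by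
      rw [Fin.sum_univ_succ (fun i => ((Fin.cons d 0 : Fin (n + 1) → ℝ) i - 0) ^ 2)]
      simp only [Fin.cons_zero, Fin.cons_succ, Pi.zero_apply, sub_zero, zero_pow two_ne_zero,
        Finset.sum_const_zero, add_zero]
      exact (Real.sq_sqrt (Finset.sum_nonneg fun i _ => sq_nonneg (v₁ i - v₂ i))).symm
    exact (integral_isoGaussPDF_comp_eq_of_sum_sq_eq (fun p q => max 0 (p - α * q)) σ hd).trans
      (integral_hockeyStick_isoGaussPDF_cons n d hσ α)

/-- For multivariate isotropic Gaussians on `ℝ^m` with means `v₁, v₂` and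
covariance `σ²I_m`, the hockey stick divergence depends only on `‖v₁ − v₂‖₂` and
equals the one-dimensional divergence `D_α(N(‖v₁−v₂‖₂, σ²)‖N(0, σ²))`. -/
theorem hockey_stick_iso_gaussian (m : ℕ) (v₁ v₂ : Fin m → ℝ) (σ α : ℝ)
    (hσ : 0 < σ) (hα : 0 ≤ α) :
    ∫ z : Fin m → ℝ, max 0 (isoGaussPDF m v₁ σ z - α * isoGaussPDF m v₂ σ z) =
      ∫ z : ℝ, max 0 (gaussPDF (Real.sqrt (∑ i, (v₁ i - v₂ i) ^ 2)) σ z -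
        α * gaussPDF 0 σ z) :=
  hockey_stick_iso_gaussian_general m v₁ v₂ σ α hσ
end
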